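/- arXiv:1603.05233 — 2 statements merged into one kernel-verified Lean document; each statement's English description precedes it below -/
import Mathlib

section
/- For every prime p, every positive integer m > 1, and every natural number z, Y_{p(z)}(m, m·p) = Y_{p(z+1)}(m+1, (m+1)·p). -/
theorem Y_p_z_succ (p m z : ℕ) (hp : p.Prime) (hm : 1 < m) :
    Nat.card {s : Multiset ℕ |
        Multiset.card s = m ∧ (∀ q ∈ s, q.Prime) ∧ s.sum = m * p ∧ s.count p = z} =
      Nat.card {s : Multiset ℕ |
        Multiset.card s = m + 1 ∧ (∀ q ∈ s, q.Prime) ∧ s.sum = (m + 1) * p ∧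
          s.count p = z + 1} := by
  apply Nat.card_eq_of_bijective (fun s =>
    ⟨p ::ₘ s.1, by
      obtain ⟨hc, hpr, hs, hz⟩ := s.2
      refine ⟨by simp [hc], ?_, by simp [hs, add_mul, add_comm], by simp [hz]⟩
      intro q hq
      rcases Multiset.mem_cons.mp hq with h | h
      · exact h ▸ hp
      · exact hpr q h⟩)
  constructor
  · rintro ⟨s, hs⟩ ⟨t, ht⟩ h
    simp only [Subtype.mk.injEq, Multiset.cons_inj_right] at h ⊢
    exact h
  · rintro ⟨t, hc, hpr, hs, hz⟩
    have hpt : p ∈ t := by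
      rw [← Multiset.count_pos, hz]; omega
    refine ⟨⟨t.erase p, ?_, ?_, ?_, ?_⟩, ?_⟩
    · rw [Multiset.card_erase_of_mem hpt, hc]; rfl
    · intro q hq; exact hpr q (Multiset.mem_of_mem_erase hq)
    · have := Multiset.cons_erase hpt
      have h2 : (p ::ₘ t.erase p).sum = (m + 1) * p := by rw [this]; exact hs
      rw [Multiset.sum_cons] at h2
      have : (m + 1) * p = p + m * p := by ring
      omega
    · have := Multiset.count_cons_self p (t.erase p)
      rw [Multiset.cons_erase hpt] at this
      omega
    · simp [Multiset.cons_erase hpt]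
end

section
/- For every prime p and every integer m ≥ 2, Y(m, m·p) = (∑_{j=2}^{m} Y_{p(0)}(j, j·p)) + 1. -/
lemma finite_primes_sum (n : ℕ) :
    {s : Multiset ℕ | (∀ q ∈ s, q.Prime) ∧ s.sum = n}.Finite := by
  apply Set.Finite.subset (Set.finite_range (fun P : n.Partition => P.parts))
  rintro s ⟨h1, h2⟩
  exact ⟨⟨s, fun hi => (h1 _ hi).pos, h2⟩, rfl⟩

lemma base_case_Y (p : ℕ) (hp : p.Prime) :
    Nat.card {s : Multiset ℕ | Multiset.card s = 1 ∧ (∀ q ∈ s, q.Prime) ∧ s.sum = 1 * p} = 1 := by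
  have hset : {s : Multiset ℕ | Multiset.card s = 1 ∧ (∀ q ∈ s, q.Prime) ∧ s.sum = 1 * p}
      = {({p} : Multiset ℕ)} := by
    ext s
    simp only [Set.mem_setOf_eq, Set.mem_singleton_iff, one_mul]
    constructor
    · rintro ⟨hc, hpr, hsum⟩
      obtain ⟨a, rfl⟩ := Multiset.card_eq_one.mp hc
      simp_all
    · rintro rfl
      simp [hp]
  rw [hset, Nat.card_coe_set_eq, Set.ncard_singleton]

lemma card_mem_eq (p : ℕ) (hp : p.Prime) (m : ℕ) :
    Nat.card {s : Multiset ℕ | (Multiset.card s = (m+1) ∧ (∀ q ∈ s, q.Prime) ∧ s.sum = (m+1) * p) ∧ p ∈ s} =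
    Nat.card {s : Multiset ℕ | Multiset.card s = m ∧ (∀ q ∈ s, q.Prime) ∧ s.sum = m * p} := by
  apply Nat.card_congr
  refine ⟨fun s => ⟨s.1.erase p, ?_⟩, fun t => ⟨p ::ₘ t.1, ?_⟩, ?_, ?_⟩
  · obtain ⟨s, ⟨hc, hpr, hsum⟩, hmem⟩ := s
    refine ⟨?_, ?_, ?_⟩
    · simp [Multiset.card_erase_of_mem hmem, hc]
    · exact fun q hq => hpr q (Multiset.mem_of_mem_erase hq)
    · have h := Multiset.cons_erase hmem
      have h2 : p + (s.erase p).sum = (m+1) * p := by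
        rw [← Multiset.sum_cons, h, hsum]
      have h3 : (m+1) * p = m * p + p := Nat.succ_mul m p
      simp only [Set.mem_setOf_eq] at *
      omega
  · obtain ⟨t, hc, hpr, hsum⟩ := t
    refine ⟨⟨by simp [hc], ?_, ?_⟩, Multiset.mem_cons_self p t⟩
    · intro q hq
      rcases Multiset.mem_cons.mp hq with rfl | hq
      · exact hp
      · exact hpr q hq
    · rw [Multiset.sum_cons, hsum, Nat.succ_mul]
      omega
  · rintro ⟨s, ⟨hc, hpr, hsum⟩, hmem⟩
    exact Subtype.ext (Multiset.cons_erase hmem)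
  · rintro ⟨t, hc, hpr, hsum⟩
    exact Subtype.ext (Multiset.erase_cons_head p t)

lemma split_Y (p : ℕ) (hp : p.Prime) (m : ℕ) :
    Nat.card {s : Multiset ℕ | Multiset.card s = (m+1) ∧ (∀ q ∈ s, q.Prime) ∧ s.sum = (m+1) * p} =
    Nat.card {s : Multiset ℕ | Multiset.card s = (m+1) ∧ (∀ q ∈ s, q.Prime) ∧ s.sum = (m+1) * p ∧ s.count p = 0} +
    Nat.card {s : Multiset ℕ | Multiset.card s = m ∧ (∀ q ∈ s, q.Prime) ∧ s.sum = m * p} := by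
  classical
  set B := {s : Multiset ℕ | Multiset.card s = (m+1) ∧ (∀ q ∈ s, q.Prime) ∧ s.sum = (m+1) * p ∧ s.count p = 0} with hB
  set C := {s : Multiset ℕ | (Multiset.card s = (m+1) ∧ (∀ q ∈ s, q.Prime) ∧ s.sum = (m+1) * p) ∧ p ∈ s} with hC
  have hunion : {s : Multiset ℕ | Multiset.card s = (m+1) ∧ (∀ q ∈ s, q.Prime) ∧ s.sum = (m+1) * p} = B ∪ C := by
    ext s
    simp only [hB, hC, Set.mem_setOf_eq, Set.mem_union]
    constructor
    · rintro ⟨h1, h2, h3⟩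
      by_cases h : s.count p = 0
      · exact Or.inl ⟨h1, h2, h3, h⟩
      · exact Or.inr ⟨⟨h1, h2, h3⟩, Multiset.count_ne_zero.mp h⟩
    · rintro (⟨h1, h2, h3, _⟩ | ⟨⟨h1, h2, h3⟩, _⟩) <;> exact ⟨h1, h2, h3⟩
  have hBfin : B.Finite := by
    apply (finite_primes_sum ((m+1)*p)).subset
    rintro s ⟨_, h1, h2, _⟩; exact ⟨h1, h2⟩
  have hCfin : C.Finite := by
    apply (finite_primes_sum ((m+1)*p)).subset
    rintro s ⟨⟨_, h1, h2⟩, _⟩; exact ⟨h1, h2⟩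
  have hdisj : Disjoint B C := by
    rw [Set.disjoint_left]
    rintro s ⟨_, _, _, hcount⟩ ⟨_, hmem⟩
    exact (Multiset.count_eq_zero.mp hcount) hmem
  rw [hunion, Nat.card_coe_set_eq, Set.ncard_union_eq hdisj hBfin hCfin,
    ← Nat.card_coe_set_eq, ← Nat.card_coe_set_eq, card_mem_eq p hp m]

theorem Y_eq_sum_Y_p_zero_add_one (p m : ℕ) (hp : p.Prime) (hm : 2 ≤ m) :
    Nat.card {s : Multiset ℕ |
        Multiset.card s = m ∧ (∀ q ∈ s, q.Prime) ∧ s.sum = m * p} =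
      (∑ j ∈ Finset.Icc 2 m,
        Nat.card {s : Multiset ℕ |
          Multiset.card s = j ∧ (∀ q ∈ s, q.Prime) ∧ s.sum = j * p ∧ s.count p = 0}) + 1 := by
  induction m, hm using Nat.le_induction with
  | base =>
    have h := split_Y p hp 1
    rw [base_case_Y p hp] at h
    simpa using h
  | succ n hn ih =>
    have h := split_Y p hp n
    rw [ih] at h
    rw [h, Finset.sum_Icc_succ_top (by omega : 2 ≤ n + 1)]
    ring
end
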